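/- For all partial Boolean functions f and g, randomized sabotage complexity composes perfectly in the lower-bound direction: RS(f ∘ g) ≥ RS(f) · RS(g). -/

import Mathlib

/-! ### Decision trees -/

/-- A deterministic decision tree querying positions of type `ι`, receiving answers
in `α`, and producing an output in `β`. -/
inductive DTree (ι α β : Type) : Type
  | leaf (b : β) : DTree ι α β
  | node (i : ι) (next : α → DTree ι α β) : DTree ι α β

namespace DTree

variable {ι α β : Type}

/-- The output of a decision tree on input `x`. -/
def output : DTree ι α β → (ι → α) → β
  | leaf b, _ => b
  | node i next, x => (next (x i)).output x

/-- The number of queries made by a decision tree on input `x`. -/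
def cost : DTree ι α β → (ι → α) → ℕ
  | leaf _, _ => 0
  | node i next, x => (next (x i)).cost x + 1

/-- The set of positions queried by a decision tree on input `x`. -/
def queries : DTree ι α β → (ι → α) → Set ι
  | leaf _, _ => ∅
  | node i next, x => insert i ((next (x i)).queries x)

end DTree

/-- A partial function on inputs `ι → α` with outputs in `β`; `none` means undefined
(the domain is the set of inputs mapped to `some` value). -/
abbrev PFn (ι α β : Type) := (ι → α) → Option β

/-- `t` computes the partial function `f` (correct on every input of the domain). -/
def DTree.computesP {ι α β : Type} (t : DTree ι α β) (f : PFn ι α β) : Prop :=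
  ∀ x b, f x = some b → t.output x = b

/-- Deterministic query complexity `D(f)`. -/
noncomputable def Dq {ι α β : Type} (f : PFn ι α β) : ℝ :=
  sInf {T : ℝ | 0 ≤ T ∧ ∃ t : DTree ι α β, t.computesP f ∧ ∀ x, (t.cost x : ℝ) ≤ T}

/-! ### Randomized query algorithms -/

/-- A randomized query algorithm: a finitely supported probability distribution over
deterministic decision trees. -/
structure RandAlg (ι α β : Type) where
  Ω : Type
  [fin : Fintype Ω]
  p : Ω → ℝ
  nonneg : ∀ ω, 0 ≤ p ω
  sum_one : ∑ ω, p ω = 1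
  tree : Ω → DTree ι α β

namespace RandAlg

variable {ι α β : Type}

/-- Expected number of queries of `A` on input `x`. -/
noncomputable def expCost (A : RandAlg ι α β) (x : ι → α) : ℝ :=
  letI := A.fin
  ∑ ω, A.p ω * ((A.tree ω).cost x : ℝ)

open Classical in
/-- Probability that `A` outputs `b` on input `x`. -/
noncomputable def succProb (A : RandAlg ι α β) (x : ι → α) (b : β) : ℝ :=
  letI := A.fin
  ∑ ω, if (A.tree ω).output x = b then A.p ω else 0

/-- `A` computes `f` with error at most `ε`: on every input of the domain the correct
output is produced with probability at least `1 - ε`. -/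
def Computes (A : RandAlg ι α β) (f : PFn ι α β) (ε : ℝ) : Prop :=
  ∀ x b, f x = some b → 1 - ε ≤ A.succProb x b

/-- The worst-case cost of `A` (over all inputs and all trees in the support) is at most `T`. -/
def WCostLe (A : RandAlg ι α β) (T : ℝ) : Prop :=
  ∀ ω, A.p ω ≠ 0 → ∀ x, ((A.tree ω).cost x : ℝ) ≤ T

/-- The expected cost of `A` on every input of the domain of `f` is at most `T`. -/
def ECostLe (A : RandAlg ι α β) (f : PFn ι α β) (T : ℝ) : Prop :=
  ∀ x, (f x).isSome → A.expCost x ≤ T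

end RandAlg

/-- `R_ε(f)`: minimum worst-case cost of an `ε`-error randomized algorithm for `f`. -/
noncomputable def Rw {ι α β : Type} (ε : ℝ) (f : PFn ι α β) : ℝ :=
  sInf {T : ℝ | 0 ≤ T ∧ ∃ A : RandAlg ι α β, A.Computes f ε ∧ A.WCostLe T}

/-- `R̄_ε(f)`: minimum expected cost of an `ε`-error randomized algorithm for `f`. -/
noncomputable def Rbar {ι α β : Type} (ε : ℝ) (f : PFn ι α β) : ℝ :=
  sInf {T : ℝ | 0 ≤ T ∧ ∃ A : RandAlg ι α β, A.Computes f ε ∧ A.ECostLe f T}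

/-- `R₀(f)`: zero-error expected randomized query complexity. -/
noncomputable def R0 {ι α β : Type} (f : PFn ι α β) : ℝ := Rbar 0 f

/-- `R(f) := R_{1/3}(f)`: bounded-error randomized query complexity. -/
noncomputable def Rb {ι α β : Type} (f : PFn ι α β) : ℝ := Rw (1/3) f

/-- The total function `f` viewed as a partial function. -/
def tot {ι α β : Type} (f : (ι → α) → β) : PFn ι α β := fun x => some (f x)


/-! ### Sabotage complexity and composition -/

/-- The four-letter alphabet `{0, 1, *, †}` of sabotaged inputs. -/
inductive Sab : Type
  | zero : Sab
  | one : Sab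
  | star : Sab
  | dagger : Sab
deriving DecidableEq

/-- Embedding of Boolean values into the sabotage alphabet. -/
def Sab.ofBool : Bool → Sab
  | false => Sab.zero
  | true => Sab.one

/-- `p` is consistent with the Boolean input `x`: wherever `p` has a Boolean entry,
it agrees with `x`. -/
def SabConsistent {ι : Type} (p : ι → Sab) (x : ι → Bool) : Prop :=
  ∀ i, p i = Sab.ofBool (x i) ∨ p i = Sab.star ∨ p i = Sab.dagger

/-- `p` is a sabotaged input for `f` using the sabotage symbol `s`: all entries of `p`
lie in `{0, 1, s}` and `p` is consistent with both a `0`-input and a `1`-input of `f`. -/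
def IsSabotaged {ι : Type} (f : PFn ι Bool Bool) (s : Sab) (p : ι → Sab) : Prop :=
  (∀ i, p i = Sab.zero ∨ p i = Sab.one ∨ p i = s) ∧
  ∃ x y, (f x).isSome ∧ (f y).isSome ∧ f x ≠ f y ∧ SabConsistent p x ∧ SabConsistent p y

open Classical in
/-- The sabotage problem `f_sab` associated with `f`: it is `0` on `P_f` (inputs
sabotaged with `*`) and `1` on `P_f†` (inputs sabotaged with `†`). -/
noncomputable def fsab {ι : Type} (f : PFn ι Bool Bool) : PFn ι Sab Bool :=
  fun p =>
    if IsSabotaged f Sab.star p then some false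
    else if IsSabotaged f Sab.dagger p then some true
    else none

open Classical in
/-- `f_usab`: the restriction of `f_sab` to inputs having exactly one `*` or `†` entry. -/
noncomputable def fusab {ι : Type} (f : PFn ι Bool Bool) : PFn ι Sab Bool :=
  fun p =>
    if ∃! i, p i = Sab.star ∨ p i = Sab.dagger then fsab f p else none

/-- Randomized sabotage complexity `RS(f) := R₀(f_sab)`. -/
noncomputable def RS {ι : Type} (f : PFn ι Bool Bool) : ℝ := R0 (fsab f)

/-- `RS_u(f) := R₀(f_usab)` (this is `0` automatically when `f_usab` has empty domain). -/
noncomputable def RSu {ι : Type} (f : PFn ι Bool Bool) : ℝ := R0 (fusab f)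

open Classical in
/-- Composition `f ∘ g` of partial functions: defined on an input exactly when every
inner copy of `g` is defined and the tuple of inner values lies in the domain of `f`. -/
noncomputable def pcomp {κ ι α β γ : Type} (f : PFn κ β γ) (g : PFn ι α β) :
    PFn (κ × ι) α γ :=
  fun x =>
    if h : ∀ i : κ, (g fun j => x (i, j)).isSome then
      f fun i => (g fun j => x (i, j)).get (h i)
    else none

/-- Index types for iterated self-composition. -/
def IterIdx (κ : Type) : ℕ → Type
  | 0 => κ
  | n + 1 => κ × IterIdx κ n

/-- `iterComp f n` is `f` composed with itself `n + 1` times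
(`iterComp f 0 = f`, `iterComp f (n+1) = f ∘ iterComp f n`). -/
noncomputable def iterComp {κ : Type} (f : PFn κ Bool Bool) : (n : ℕ) → PFn (IterIdx κ n) Bool Bool
  | 0 => f
  | n + 1 => pcomp f (iterComp f n)

/-! ### The index function -/

/-- The value of a bit-string read as a binary number (bit `i` has weight `2^i`). -/
def binval {b : ℕ} (x : Fin b → Bool) : ℕ := ∑ i, if x i then 2 ^ (i : ℕ) else 0

theorem sum_range_two_pow (b : ℕ) : ∑ i ∈ Finset.range b, 2 ^ i = 2 ^ b - 1 := by
  induction b with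
  | zero => simp
  | succ n ih =>
    rw [Finset.sum_range_succ, ih, pow_succ]
    have : 1 ≤ 2 ^ n := Nat.one_le_two_pow
    omega

theorem binval_lt {b : ℕ} (x : Fin b → Bool) : binval x < 2 ^ b := by
  have h1 : binval x ≤ ∑ i : Fin b, 2 ^ (i : ℕ) := by
    refine Finset.sum_le_sum fun i _ => ?_
    split <;> simp
  have h2 : ∑ i : Fin b, 2 ^ (i : ℕ) = 2 ^ b - 1 := by
    rw [Fin.sum_univ_eq_sum_range (fun i => 2 ^ i) b]
    exact sum_range_two_pow b
  have h3 : 0 < 2 ^ b := Nat.pow_pos (by norm_num)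
  omega

/-- The largest `c` with `c + 2^c ≤ m`. -/
def indexC (m : ℕ) : ℕ := Nat.findGreatest (fun c => c + 2 ^ c ≤ m) m

/-- The index function `Ind_m : {0,1}^m → {0,1}`: the first `c` bits (where `c` is the
largest integer with `c + 2^c ≤ m`) are read as a binary address `y` into the next
`2^c` bits, and the output is the addressed bit. -/
def IndFn (m : ℕ) : PFn (Fin m) Bool Bool :=
  fun x =>
    let c := indexC m
    let y := ∑ i : Fin m, if (i : ℕ) < c ∧ x i = true then 2 ^ (i : ℕ) else 0
    if h : c + y < m then some (x ⟨c + y, h⟩) else none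

/-- `f^{⊕c}_ind`: the index function on `c + 2^c` bits with `f` composed into each of
the `c` address bits only. -/
def findex {n : ℕ} (f : PFn (Fin n) Bool Bool) (c : ℕ) :
    PFn ((Fin c × Fin n) ⊕ Fin (2 ^ c)) Bool Bool :=
  fun x =>
    if h : ∀ i : Fin c, (f fun j => x (Sum.inl (i, j))).isSome then
      some (x (Sum.inr ⟨binval fun i => (f fun j => x (Sum.inl (i, j))).get (h i),
        binval_lt _⟩))
    else none

/-!
By a minimax (Hahn–Banach) argument there is a distribution `D` on the domain of `g_sab` against
which every decision tree must spend, in expectation, `RS g` queries before it reads a sabotaged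
position, per unit of probability of reading one: otherwise a mixture of trees, repeated until it
reads a symbol and backed up by a trivial algorithm, would solve `g_sab` with zero error faster
than `RS g`.

Given an algorithm for `(f ∘ g)_sab` and an input `p` of `f_sab`, draw every block independently
from `D`, fill the sabotaged positions of block `i` according to `p i` (with a completion of the
block to a `g`-input of value `p i` if `p i` is a bit, with the symbol `p i` otherwise), and run
the algorithm on the result, querying `p i` only when it reads a sabotaged position of block `i`.
The composed input lies in the domain of `(f ∘ g)_sab` with the answer of `p`, and since block `i`
is a fresh sample from `D` given the other blocks, the queries of the algorithm to block `i` are at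
least `RS g` times the probability that `p i` gets queried. So `RS f ≤ RS (f ∘ g) / RS g`.
-/

open Function
open scoped Classical

theorem nonneg_of_sum_mul_lt_of_forall_neg {Q : Type} [Fintype Q] {c : Q → ℝ} {u : ℝ}
    (h : ∀ x : Q → ℝ, (∀ q, x q < 0) → ∑ q, c q * x q < u) : (∀ q, 0 ≤ c q) ∧ 0 ≤ u := by
  have hsum : 0 < u + ∑ q, c q := by
    have := h (fun _ => -1) fun _ => neg_one_lt_zero
    simp only [mul_neg_one, Finset.sum_neg_distrib] at this
    linarith
  refine ⟨fun q => ?_, ?_⟩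
  · by_contra! hq
    have := h (fun j => -1 - (u + ∑ q, c q) / -c q * if q = j then 1 else 0) fun j => by
      have : 0 ≤ (u + ∑ q, c q) / -c q * if q = j then 1 else 0 :=
        mul_nonneg (div_nonneg hsum.le (neg_nonneg.2 hq.le)) (by split_ifs <;> norm_num)
      linarith
    simp only [mul_sub, mul_neg_one, mul_ite, mul_one, mul_zero, Finset.sum_sub_distrib,
      Finset.sum_neg_distrib, Finset.sum_ite_eq, Finset.mem_univ, if_true] at this
    have hcancel : c q * ((u + ∑ q, c q) / -c q) = -(u + ∑ q, c q) := by
      field_simp [hq.ne]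
    linarith
  · by_contra! hu
    have hpos : 0 < ∑ q, c q := by linarith
    have := h (fun _ => u / ∑ q, c q) fun _ => div_neg_of_neg_of_pos hu hpos
    rw [← Finset.sum_mul, mul_div_cancel₀ _ hpos.ne'] at this
    exact this.false

theorem exists_prob_nonneg_of_convexHull {Q : Type} [Fintype Q] {S : Set (Q → ℝ)}
    (hS : S.Nonempty) (h : ∀ x ∈ convexHull ℝ S, ∃ q, 0 ≤ x q) :
    ∃ D : Q → ℝ, (∀ q, 0 ≤ D q) ∧ ∑ q, D q = 1 ∧ ∀ x ∈ S, 0 ≤ ∑ q, D q * x q := by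
  let B : Set (Q → ℝ) := Set.univ.pi fun _ => Set.Iio 0
  have hdisj : Disjoint B (convexHull ℝ S) := Set.disjoint_right.2 fun x hx hxB => by
    obtain ⟨q, hq⟩ := h x hx
    exact (hxB q (Set.mem_univ q)).not_ge hq
  obtain ⟨φ, u, hφB, hφS⟩ := geometric_hahn_banach_open (convex_pi fun _ _ => convex_Iio 0)
    (isOpen_set_pi Set.finite_univ fun _ _ => isOpen_Iio) (convex_convexHull ℝ S) hdisj
  let c : Q → ℝ := fun q => φ fun j => if q = j then 1 else 0
  have hφ : ∀ x, φ x = ∑ q, c q * x q := fun x => by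
    rw [← ContinuousLinearMap.coe_coe, LinearMap.pi_apply_eq_sum_univ]
    exact Finset.sum_congr rfl fun q _ => by rw [smul_eq_mul, mul_comm]; rfl
  have hS' : ∀ x ∈ S, u ≤ ∑ q, c q * x q := fun x hx => hφ x ▸ hφS x (subset_convexHull ℝ S hx)
  obtain ⟨hc, hu⟩ := nonneg_of_sum_mul_lt_of_forall_neg fun x hx => hφ x ▸ hφB x fun q _ => hx q
  have hcpos : 0 < ∑ q, c q := by
    refine (Finset.sum_nonneg fun q _ => hc q).lt_of_ne fun h0 => ?_
    obtain ⟨s, hs⟩ := hS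
    have hzero := (Finset.sum_eq_zero_iff_of_nonneg fun q _ => hc q).1 h0.symm
    have := hS' s hs
    rw [Finset.sum_eq_zero fun q hq => by rw [hzero q hq, zero_mul]] at this
    have := hφB (fun _ => -1) fun _ _ => Set.mem_Iio.2 neg_one_lt_zero
    rw [hφ, Finset.sum_eq_zero fun q hq => by rw [hzero q hq, zero_mul]] at this
    linarith
  refine ⟨fun q => c q / ∑ q, c q, fun q => div_nonneg (hc q) hcpos.le, ?_, fun x hx => ?_⟩
  · rw [← Finset.sum_div, div_self hcpos.ne']
  · simp_rw [div_mul_eq_mul_div, ← Finset.sum_div]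
    exact div_nonneg (hu.trans (hS' x hx)) hcpos.le

theorem sum_prod_mul_eq_sum_prod_mul_sum_update {κ Q : Type} [Fintype κ] [DecidableEq κ]
    [Fintype Q] {D : Q → ℝ} (hD : ∑ k, D k = 1) (F : (κ → Q) → ℝ) (i : κ) :
    ∑ v, (∏ j, D (v j)) * F v = ∑ v, (∏ j, D (v j)) * ∑ k, D k * F (update v i k) := by
  let e : Equiv.Perm ((κ → Q) × Q) := Involutive.toPerm (fun vk => (update vk.1 i vk.2, vk.1 i))
    fun ⟨v, k⟩ => by simp
  have hW : ∀ v k, (∏ j, D (v j)) * D k = (∏ j, D (update v i k j)) * D (v i) := fun v k => by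
    simp only [Finset.prod_eq_mul_prod_sdiff_singleton_of_mem (Finset.mem_univ i), update_self]
    have : ∏ j ∈ Finset.univ \ {i}, D (update v i k j) = ∏ j ∈ Finset.univ \ {i}, D (v j) :=
      Finset.prod_congr rfl fun j hj => by rw [update_of_ne (by simpa using hj)]
    rw [this]
    ring
  calc ∑ v, (∏ j, D (v j)) * F v
      = ∑ vk : (κ → Q) × Q, (∏ j, D (vk.1 j)) * D vk.2 * F vk.1 := by
        simp only [Fintype.sum_prod_type, ← Finset.mul_sum, ← Finset.sum_mul, hD, mul_one]
    _ = ∑ vk : (κ → Q) × Q, (∏ j, D ((e vk).1 j)) * D (e vk).2 * F (e vk).1 :=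
        (Equiv.sum_comp (e : _ ≃ _) _).symm
    _ = ∑ v, (∏ j, D (v j)) * ∑ k, D k * F (update v i k) := by
        simp only [Fintype.sum_prod_type, Finset.mul_sum]
        refine Finset.sum_congr rfl fun v _ => Finset.sum_congr rfl fun k _ => ?_
        rw [← mul_assoc, hW v k]
        rfl

namespace DTree

variable {ι α β : Type} [DecidableEq ι] [Inhabited α]

def readAll : List ι → ((ι → α) → β) → DTree ι α β
  | [], h => leaf (h fun _ => default)
  | i :: L, h => node i fun a => readAll L fun y => h (update y i a)

theorem output_readAll (L : List ι) (h : (ι → α) → β) (x : ι → α) :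
    (readAll L h).output x = h fun j => if j ∈ L then x j else default := by
  induction L generalizing h with
  | nil => rfl
  | cons i L ih =>
    simp only [readAll, output, ih, List.mem_cons]
    congr 1
    funext j
    by_cases hj : j = i <;> simp [hj]

theorem cost_readAll (L : List ι) (h : (ι → α) → β) (x : ι → α) :
    (readAll L h).cost x = L.length := by
  induction L generalizing h with
  | nil => rfl
  | cons i L ih => simp [readAll, cost, ih]

variable {κ μ γ : Type} [DecidableEq κ]

def blockCost : DTree (κ × μ) β γ → (κ × μ → β) → κ → ℕ
  | leaf _, _, _ => 0
  | node ij next, x, i => (next (x ij)).blockCost x i + if ij.1 = i then 1 else 0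

theorem sum_blockCost [Fintype κ] (t : DTree (κ × μ) β γ) (x : κ × μ → β) :
    ∑ i, t.blockCost x i = t.cost x := by
  induction t with
  | leaf => simp [blockCost, cost]
  | node ij next ih => simp [blockCost, cost, Finset.sum_add_distrib, ih]

def restrictBlock (x : κ × μ → β) (i : κ) : DTree (κ × μ) β γ → DTree μ β γ
  | leaf c => leaf c
  | node ij next =>
    if ij.1 = i then node ij.2 fun b => (next b).restrictBlock x i
    else (next (x ij)).restrictBlock x i

theorem restrictBlock_congr {x x' : κ × μ → β} {i : κ} (h : ∀ ij : κ × μ, ij.1 ≠ i → x ij = x' ij)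
    (t : DTree (κ × μ) β γ) : t.restrictBlock x i = t.restrictBlock x' i := by
  induction t with
  | leaf => rfl
  | node ij next ih =>
    by_cases hi : ij.1 = i
    · simp [restrictBlock, hi, ih]
    · simp [restrictBlock, hi, ih, h ij hi]

end DTree

section Simulation

variable {κ μ α β γ : Type}

def blockInput (fixed : κ × μ → Option β) (read : κ → α → μ → β) (p : κ → α) : κ × μ → β :=
  fun ij => (fixed ij).getD (read ij.1 (p ij.1) ij.2)

namespace DTree

variable {fixed : κ × μ → Option β} {read : κ → α → μ → β} {p : κ → α}

noncomputable def readBlocks [Fintype κ] (fixed : κ × μ → Option β) (read : κ → α → μ → β)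
    (p : κ → α) (t : DTree (κ × μ) β γ) (known : κ → Option α) : Finset κ :=
  Finset.univ.filter fun i => known i = none ∧
    ∃ j, (i, j) ∈ t.queries (blockInput fixed read p) ∧ fixed (i, j) = none

theorem readBlocks_node_subset [Fintype κ] {ij : κ × μ} {next : β → DTree (κ × μ) β γ}
    {known known' : κ → Option α} (h : ∀ i, known' i = none → known i = none) :
    readBlocks fixed read p (next (blockInput fixed read p ij)) known' ⊆
      readBlocks fixed read p (node ij next) known := by
  intro i
  simp only [readBlocks, Finset.mem_filter, Finset.mem_univ, true_and, queries, Set.mem_insert_iff]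
  exact fun ⟨hi, j, hj, hfix⟩ => ⟨h i hi, j, Or.inr hj, hfix⟩

variable [DecidableEq κ]

theorem eq_of_update_eq_some {known : κ → Option α} (hk : ∀ i a, known i = some a → p i = a)
    (i : κ) : ∀ i' a, update known i (some (p i)) i' = some a → p i' = a := fun i' a => by
  rcases eq_or_ne i' i with rfl | hi
  · simp
  · rw [update_of_ne hi]; exact hk i' a

/-- `known` caches the blocks of `p` already queried, so that each block is queried at most once. -/
def simulate (fixed : κ × μ → Option β) (read : κ → α → μ → β) :
    DTree (κ × μ) β γ → (κ → Option α) → DTree κ α γ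
  | leaf c, _ => leaf c
  | node ij next, known =>
    match fixed ij, known ij.1 with
    | some b, _ => (next b).simulate fixed read known
    | none, some a => (next (read ij.1 a ij.2)).simulate fixed read known
    | none, none => node ij.1 fun a =>
        (next (read ij.1 a ij.2)).simulate fixed read (update known ij.1 (some a))

theorem output_simulate (t : DTree (κ × μ) β γ) {known : κ → Option α}
    (hk : ∀ i a, known i = some a → p i = a) :
    (t.simulate fixed read known).output p = t.output (blockInput fixed read p) := by
  induction t generalizing known with
  | leaf => rfl
  | node ij next ih =>
    have hX : blockInput fixed read p ij = (fixed ij).getD (read ij.1 (p ij.1) ij.2) := rfl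
    rcases hf : fixed ij with _ | b <;> rcases hkn : known ij.1 with _ | a
    · simp [simulate, output, hf, hkn, hX, ih _ (eq_of_update_eq_some hk ij.1)]
    · simp [simulate, output, hf, hkn, hX, ih _ hk, hk _ _ hkn]
    all_goals simp [simulate, output, hf, hkn, hX, ih _ hk]

theorem cost_simulate_le [Fintype κ] (t : DTree (κ × μ) β γ) {known : κ → Option α}
    (hk : ∀ i a, known i = some a → p i = a) :
    (t.simulate fixed read known).cost p ≤ (readBlocks fixed read p t known).card := by
  induction t generalizing known with
  | leaf => exact Nat.zero_le _
  | node ij next ih =>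
    have hX : blockInput fixed read p ij = (fixed ij).getD (read ij.1 (p ij.1) ij.2) := rfl
    have hmono := readBlocks_node_subset (fixed := fixed) (read := read) (p := p) (ij := ij)
      (next := next) (known := known) (known' := known) fun _ => id
    rcases hf : fixed ij with _ | b <;> rcases hkn : known ij.1 with _ | a
    · set known' := update known ij.1 (some (p ij.1))
      have hsub : readBlocks fixed read p (next (blockInput fixed read p ij)) known' ⊆
          (readBlocks fixed read p (node ij next) known).erase ij.1 := fun i hi => by
        have hne : i ≠ ij.1 := fun h => by simp [readBlocks, known', h] at hi
        refine Finset.mem_erase.2 ⟨hne, readBlocks_node_subset (fun i' hi' => ?_) hi⟩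
        rcases eq_or_ne i' ij.1 with rfl | hi''
        · simp [known'] at hi'
        · simpa [known', update_of_ne hi''] using hi'
      have hmem : ij.1 ∈ readBlocks fixed read p (node ij next) known := by
        rw [readBlocks, Finset.mem_filter]
        exact ⟨Finset.mem_univ _, hkn, ij.2, Set.mem_insert _ _, hf⟩
      have := Finset.card_lt_card (hsub.trans_ssubset (Finset.erase_ssubset hmem))
      simp only [hX, hf, Option.getD_none] at this
      simp only [simulate, hf, hkn, cost]
      exact Nat.succ_le_of_lt ((ih _ (eq_of_update_eq_some hk ij.1)).trans_lt this)
    · simp only [hX, hf, Option.getD_none, hk _ _ hkn] at hmono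
      simp only [simulate, hf, hkn]
      exact (ih _ hk).trans (Finset.card_le_card hmono)
    all_goals
      simp only [hX, hf, Option.getD_some] at hmono
      simp only [simulate, hf]
      exact (ih _ hk).trans (Finset.card_le_card hmono)

end DTree

end Simulation

namespace RandAlg

variable {ι α β : Type}

def ofTree (t : DTree ι α β) : RandAlg ι α β where
  Ω := Unit
  p _ := 1
  nonneg _ := zero_le_one
  sum_one := by simp
  tree _ := t

theorem expCost_ofTree (t : DTree ι α β) (x : ι → α) : (ofTree t).expCost x = t.cost x := by
  change ∑ _ : Unit, 1 * (t.cost x : ℝ) = _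
  simp

theorem computes_zero_iff (A : RandAlg ι α β) (f : PFn ι α β) :
    A.Computes f 0 ↔ ∀ x b, f x = some b → ∀ ω, A.p ω ≠ 0 → (A.tree ω).output x = b := by
  let := A.fin
  have key : ∀ x b, 1 - A.succProb x b = ∑ ω, if (A.tree ω).output x = b then 0 else A.p ω := by
    intro x b
    rw [← A.sum_one, succProb, ← Finset.sum_sub_distrib]
    exact Finset.sum_congr rfl fun ω _ => by split_ifs <;> ring
  refine forall₂_congr fun x b => imp_congr_right fun _ => ?_
  have hterm : ∀ ω, 0 ≤ if (A.tree ω).output x = b then 0 else A.p ω := fun ω => by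
    split_ifs
    exacts [le_rfl, A.nonneg ω]
  rw [sub_zero, ← sub_nonpos, key, (Finset.sum_nonneg fun ω _ => hterm ω).ge_iff_eq',
    Finset.sum_eq_zero_iff_of_nonneg fun ω _ => hterm ω]
  refine forall_congr' fun ω => ?_
  split_ifs with h <;> simp [h]

theorem computes_ofTree {t : DTree ι α β} {f : PFn ι α β} (ht : t.computesP f) :
    (ofTree t).Computes f 0 :=
  (computes_zero_iff _ _).2 fun x b hx _ _ => ht x b hx

end RandAlg

section R0

variable {ι α β : Type}

theorem R0_nonneg (f : PFn ι α β) : 0 ≤ R0 f :=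
  Real.sInf_nonneg fun _ hT => hT.1

theorem R0_le {f : PFn ι α β} {T : ℝ} (hT : 0 ≤ T) {A : RandAlg ι α β} (hA : A.Computes f 0)
    (hcost : A.ECostLe f T) : R0 f ≤ T :=
  csInf_le ⟨0, fun _ hT => hT.1⟩ ⟨hT, A, hA, hcost⟩

theorem R0_eq_zero_of_forall_eq_none [Inhabited β] {f : PFn ι α β} (hf : ∀ x, f x = none) :
    R0 f = 0 :=
  (R0_le le_rfl (A := .ofTree (.leaf default))
    (RandAlg.computes_ofTree fun x b hx => by simp [hf] at hx)
    fun x hx => by simp [hf] at hx).antisymm (R0_nonneg f)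

theorem RS_nonneg (g : PFn ι Bool Bool) : 0 ≤ RS g :=
  R0_nonneg _

variable [Fintype ι] [DecidableEq ι] [Inhabited α] [Inhabited β]

theorem exists_computes_zero_ecostLe_card (f : PFn ι α β) :
    ∃ A : RandAlg ι α β, A.Computes f 0 ∧ A.ECostLe f (Fintype.card ι) := by
  let t := DTree.readAll Finset.univ.toList fun x => (f x).getD default
  refine ⟨.ofTree t, RandAlg.computes_ofTree fun x b hx => ?_, fun x _ => ?_⟩
  · simp [t, DTree.output_readAll, hx]
  · simp [t, RandAlg.expCost_ofTree, DTree.cost_readAll]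

theorem le_R0 {f : PFn ι α β} {c : ℝ}
    (h : ∀ T (A : RandAlg ι α β), 0 ≤ T → A.Computes f 0 → A.ECostLe f T → c ≤ T) :
    c ≤ R0 f := by
  obtain ⟨A, hA, hcost⟩ := exists_computes_zero_ecostLe_card f
  exact le_csInf ⟨_, Nat.cast_nonneg _, A, hA, hcost⟩ fun T ⟨hT, A, hA, hcost⟩ => h T A hT hA hcost

end R0

instance : Fintype Sab where
  elems := {.zero, .one, .star, .dagger}
  complete a := by cases a <;> simp

instance : Inhabited Sab := ⟨.zero⟩

namespace Sab

def isSym : Sab → Bool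
  | .star | .dagger => true
  | _ => false

/-- The symbol that sabotages an input towards the answer `b` of `f_sab`. -/
def sym : Bool → Sab
  | false => .star
  | true => .dagger

@[simp] theorem isSym_sym (b : Bool) : (sym b).isSym := by cases b <;> rfl

@[simp] theorem isSym_ofBool (b : Bool) : (ofBool b).isSym = false := by cases b <;> rfl

theorem ofBool_eq_zero_or_eq_one (b : Bool) : ofBool b = .zero ∨ ofBool b = .one := by
  cases b <;> simp [ofBool]

theorem ofBool_injective : Injective ofBool := by
  intro a b h
  cases a <;> cases b <;> simp_all [ofBool]

end Sab

section Sabotage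

variable {ι : Type} {g : PFn ι Bool Bool} {q : ι → Sab}

theorem SabConsistent.eq_ofBool {x : ι → Bool} (hx : SabConsistent q x) {i : ι}
    (hi : (q i).isSym = false) : q i = Sab.ofBool (x i) := by
  rcases hx i with h | h | h <;> simp_all [Sab.isSym]

theorem IsSabotaged.eq_of_isSym {s : Sab} (hq : IsSabotaged g s q) {i : ι} (hi : (q i).isSym) :
    q i = s := by
  rcases hq.1 i with h | h | h <;> simp_all [Sab.isSym]

theorem IsSabotaged.exists_eq {s : Sab} (hq : IsSabotaged g s q) : ∃ i, q i = s := by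
  by_contra! hne
  have hbits : ∀ i, (q i).isSym = false := fun i => by
    simpa using mt hq.eq_of_isSym (hne i)
  obtain ⟨-, x, y, -, -, hxy, hx, hy⟩ := hq
  refine hxy (congrArg g (funext fun i => Sab.ofBool_injective ?_))
  rw [← hx.eq_ofBool (hbits i), ← hy.eq_ofBool (hbits i)]

theorem fsab_eq_some_iff {b : Bool} : fsab g q = some b ↔ IsSabotaged g (Sab.sym b) q := by
  have hdisj : IsSabotaged g .dagger q → ¬IsSabotaged g .star q := fun hd hs => by
    obtain ⟨i, hi⟩ := hs.exists_eq
    simpa [hi] using hd.eq_of_isSym (i := i) (by simp [hi, Sab.isSym])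
  cases b <;> by_cases hs : IsSabotaged g .star q <;> by_cases hd : IsSabotaged g .dagger q <;>
    simp_all [fsab, Sab.sym]

theorem exists_completion (hq : (fsab g q).isSome) (b : Bool) :
    ∃ x, SabConsistent q x ∧ g x = some b := by
  obtain ⟨b₀, hb₀⟩ := Option.isSome_iff_exists.1 hq
  obtain ⟨-, x, y, hx, hy, hxy, hqx, hqy⟩ := fsab_eq_some_iff.1 hb₀
  obtain ⟨bx, hbx⟩ := Option.isSome_iff_exists.1 hx
  obtain ⟨by', hby⟩ := Option.isSome_iff_exists.1 hy
  rw [hbx, hby] at hxy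
  rcases (by cases b <;> cases bx <;> cases by' <;> simp_all : b = bx ∨ b = by') with rfl | rfl
  exacts [⟨x, hqx, hbx⟩, ⟨y, hqy, hby⟩]

abbrev SabDom (g : PFn ι Bool Bool) := {q : ι → Sab // (fsab g q).isSome}

end Sabotage

namespace DTree

variable {ι β : Type}

def symCost : DTree ι Sab β → (ι → Sab) → ℕ
  | leaf _, _ => 0
  | node i next, y => if (y i).isSym then 1 else (next (y i)).symCost y + 1

def FindsSym (t : DTree ι Sab β) (y : ι → Sab) : Prop := ∃ i ∈ t.queries y, (y i).isSym

@[simp] theorem not_findsSym_leaf (b : β) (y : ι → Sab) : ¬(leaf b).FindsSym y := by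
  simp [FindsSym, queries]

@[simp] theorem findsSym_node (i : ι) (next : Sab → DTree ι Sab β) (y : ι → Sab) :
    (node i next).FindsSym y ↔ (y i).isSym ∨ (next (y i)).FindsSym y := by
  simp [FindsSym, queries]

def stopAtSym : DTree ι Sab β → DTree ι Sab Bool → DTree ι Sab Bool
  | leaf _, fb => fb
  | node i next, fb => node i fun
    | .star => leaf false
    | .dagger => leaf true
    | a => (next a).stopAtSym fb

theorem cost_stopAtSym (fb : DTree ι Sab Bool) (s : DTree ι Sab β) (y : ι → Sab) :
    (s.stopAtSym fb).cost y = s.symCost y + if s.FindsSym y then 0 else fb.cost y := by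
  induction s with
  | leaf => simp [stopAtSym, symCost]
  | node i next ih =>
    rcases h : y i <;> simp [stopAtSym, symCost, cost, h, ih, Sab.isSym] <;> omega

theorem output_stopAtSym {fb : DTree ι Sab Bool} {y : ι → Sab} {b : Bool}
    (hsym : ∀ i, (y i).isSym → y i = Sab.sym b) (hfb : fb.output y = b) (s : DTree ι Sab β) :
    (s.stopAtSym fb).output y = b := by
  induction s with
  | leaf => exact hfb
  | node i next ih =>
    have := hsym i
    rcases h : y i <;> cases b <;> simp_all [stopAtSym, output, Sab.isSym, Sab.sym]

variable {κ μ γ : Type} [DecidableEq κ] {x : κ × μ → Sab} {i : κ} {y : μ → Sab}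

theorem findsSym_restrictBlock_iff (hxy : ∀ j, (y j).isSym = false → x (i, j) = y j)
    (t : DTree (κ × μ) Sab γ) :
    (t.restrictBlock x i).FindsSym y ↔ ∃ j, (i, j) ∈ t.queries x ∧ (y j).isSym := by
  induction t with
  | leaf => simp [restrictBlock, queries]
  | node ij next ih =>
    obtain ⟨i', j⟩ := ij
    by_cases hi : i' = i
    · subst hi
      cases hy : (y j).isSym
      · simp [restrictBlock, queries, hy, hxy j hy, ih]
      · simp [restrictBlock, queries, hy]
    · simp [restrictBlock, queries, hi, ih, Ne.symm hi]

theorem symCost_restrictBlock_le (hxy : ∀ j, (y j).isSym = false → x (i, j) = y j)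
    (t : DTree (κ × μ) Sab γ) : (t.restrictBlock x i).symCost y ≤ t.blockCost x i := by
  induction t with
  | leaf => simp [restrictBlock, symCost, blockCost]
  | node ij next ih =>
    obtain ⟨i', j⟩ := ij
    by_cases hi : i' = i
    · subst hi
      cases hy : (y j).isSym
      · simp [restrictBlock, symCost, blockCost, hy, hxy j hy, ih]
      · simp [restrictBlock, symCost, blockCost, hy]
    · simp [restrictBlock, blockCost, hi, ih]

end DTree

namespace RandAlg

variable {ι β : Type}

noncomputable def expSymCost (W : RandAlg ι Sab β) (y : ι → Sab) : ℝ :=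
  letI := W.fin
  ∑ ω, W.p ω * (W.tree ω).symCost y

noncomputable def findProb (W : RandAlg ι Sab β) (y : ι → Sab) : ℝ :=
  letI := W.fin
  ∑ ω, W.p ω * if (W.tree ω).FindsSym y then 1 else 0

theorem expSymCost_nonneg (W : RandAlg ι Sab β) (y : ι → Sab) : 0 ≤ W.expSymCost y :=
  letI := W.fin
  Finset.sum_nonneg fun ω _ => mul_nonneg (W.nonneg ω) (Nat.cast_nonneg _)

theorem findProb_le_one (W : RandAlg ι Sab β) (y : ι → Sab) : W.findProb y ≤ 1 := by
  let := W.fin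
  rw [← W.sum_one, findProb]
  exact Finset.sum_le_sum fun ω _ => mul_le_of_le_one_right (W.nonneg ω) (by split_ifs <;> norm_num)

def stopAtSym (W : RandAlg ι Sab β) (B : RandAlg ι Sab Bool) : RandAlg ι Sab Bool :=
  letI := W.fin
  letI := B.fin
  { Ω := W.Ω × B.Ω
    p := fun ω => W.p ω.1 * B.p ω.2
    nonneg := fun ω => mul_nonneg (W.nonneg _) (B.nonneg _)
    sum_one := by rw [Fintype.sum_prod_type, ← Finset.sum_mul_sum, W.sum_one, B.sum_one, mul_one]
    tree := fun ω => (W.tree ω.1).stopAtSym (B.tree ω.2) }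

theorem expCost_stopAtSym (W : RandAlg ι Sab β) (B : RandAlg ι Sab Bool) (y : ι → Sab) :
    (W.stopAtSym B).expCost y = W.expSymCost y + (1 - W.findProb y) * B.expCost y := by
  let := W.fin
  let := B.fin
  have hmiss : 1 - W.findProb y = ∑ ω, W.p ω * if (W.tree ω).FindsSym y then 0 else 1 := by
    nth_rewrite 1 [← W.sum_one]
    rw [findProb, ← Finset.sum_sub_distrib]
    exact Finset.sum_congr rfl fun ω _ => by split_ifs <;> ring
  rw [hmiss, Finset.sum_mul, expSymCost, ← Finset.sum_add_distrib]
  change ∑ ω : W.Ω × B.Ω, _ = _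
  rw [Fintype.sum_prod_type]
  refine Finset.sum_congr rfl fun ω _ => ?_
  change ∑ ω' : B.Ω, W.p ω * B.p ω' * (((W.tree ω).stopAtSym (B.tree ω')).cost y : ℝ) = _
  have hB : ∑ ω' : B.Ω, W.p ω * B.p ω' * ((W.tree ω).symCost y : ℝ) =
      W.p ω * (W.tree ω).symCost y := by
    rw [← Finset.sum_mul, ← Finset.mul_sum, B.sum_one, mul_one]
  split_ifs with h
  · simpa [DTree.cost_stopAtSym, h] using hB
  · simp only [DTree.cost_stopAtSym, h, if_false, Nat.cast_add, mul_add, Finset.sum_add_distrib,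
      hB, expCost]
    rw [mul_one, Finset.mul_sum]
    exact congrArg _ (Finset.sum_congr rfl fun _ _ => mul_assoc ..)

theorem computes_stopAtSym {g : PFn ι Bool Bool} (W : RandAlg ι Sab β) {B : RandAlg ι Sab Bool}
    (hB : B.Computes (fsab g) 0) : (W.stopAtSym B).Computes (fsab g) 0 := by
  rw [computes_zero_iff] at hB ⊢
  intro y b hy ω hω
  have hsab := fsab_eq_some_iff.1 hy
  exact DTree.output_stopAtSym (fun i hi => hsab.eq_of_isSym hi)
    (hB y b hy ω.2 (right_ne_zero_of_mul hω)) _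

theorem expCost_iterate_stopAtSym_le (W : RandAlg ι Sab β) (B : RandAlg ι Sab Bool)
    {y : ι → Sab} {R δ r M : ℝ} (hsearch : W.expSymCost y ≤ R * W.findProb y - δ) (hδ : 0 ≤ δ)
    (hr : 1 - W.findProb y ≤ r) (hM : 0 ≤ M) (hB : B.expCost y ≤ R - δ + M) (N : ℕ) :
    (W.stopAtSym^[N] B).expCost y ≤ R - δ + r ^ N * M := by
  induction N with
  | zero => simpa using hB
  | succ N ih =>
    have hmiss : 0 ≤ 1 - W.findProb y := sub_nonneg.2 (W.findProb_le_one y)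
    have hrN : 0 ≤ r ^ N * M := mul_nonneg (pow_nonneg (hmiss.trans hr) N) hM
    rw [iterate_succ_apply', expCost_stopAtSym, pow_succ']
    nlinarith [mul_le_mul_of_nonneg_left ih hmiss, mul_le_mul_of_nonneg_right hr hrN,
      mul_nonneg hmiss hδ]

end RandAlg

theorem exists_RS_mul_findProb_le {ι β : Type} [Fintype ι] [DecidableEq ι] {g : PFn ι Bool Bool}
    (hg : ∃ q, (fsab g q).isSome) (W : RandAlg ι Sab β) :
    ∃ q, (fsab g q).isSome ∧ RS g * W.findProb q ≤ W.expSymCost q := by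
  by_contra! hW
  have : Nonempty (SabDom g) := hg.elim fun q hq => ⟨⟨q, hq⟩⟩
  obtain ⟨⟨q₀, hq₀⟩, hmin⟩ := Finite.exists_min fun q : SabDom g =>
    RS g * W.findProb q - W.expSymCost q
  set δ := RS g * W.findProb q₀ - W.expSymCost q₀
  have hδ : 0 < δ := sub_pos.2 (hW q₀ hq₀)
  have hsearch : ∀ q, (fsab g q).isSome → W.expSymCost q ≤ RS g * W.findProb q - δ :=
    fun q hq => by linarith [hmin ⟨q, hq⟩]
  have hδRS : δ ≤ RS g * W.findProb q₀ := by linarith [W.expSymCost_nonneg q₀]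
  have hRS : 0 < RS g := (RS_nonneg g).lt_of_ne fun h => by
    rw [← h, zero_mul] at hδRS
    linarith
  have hδle : δ ≤ RS g := by nlinarith [W.findProb_le_one q₀]
  set r := 1 - δ / RS g
  have hr : ∀ q, (fsab g q).isSome → 1 - W.findProb q ≤ r := fun q hq => by
    rw [sub_le_sub_iff_left, div_le_iff₀ hRS]
    nlinarith [hsearch q hq, W.expSymCost_nonneg q]
  have hr0 : 0 ≤ r := sub_nonneg.2 ((div_le_one hRS).2 hδle)
  have hr1 : r < 1 := sub_lt_self _ (div_pos hδ hRS)
  obtain ⟨B, hB, hBcost⟩ := exists_computes_zero_ecostLe_card (fsab g)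
  set M := (Fintype.card ι : ℝ)
  have hcomp : ∀ N, (W.stopAtSym^[N] B).Computes (fsab g) 0 := by
    intro N
    induction N with
    | zero => exact hB
    | succ N ih => rw [iterate_succ_apply']; exact W.computes_stopAtSym ih
  obtain ⟨N, hN⟩ := (((tendsto_pow_atTop_nhds_zero_of_lt_one hr0 hr1).mul_const M).eventually
    (gt_mem_nhds (by rw [zero_mul]; exact half_pos hδ))).exists
  have hcost : (W.stopAtSym^[N] B).ECostLe (fsab g) (RS g - δ / 2) := fun q hq => by
    have := W.expCost_iterate_stopAtSym_le B (hsearch q hq) hδ.le (hr q hq) (Nat.cast_nonneg _)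
      (by linarith [hBcost q hq]) N
    linarith
  have := R0_le (by linarith) (hcomp N) hcost
  unfold RS at hRS this
  linarith

structure HardDist {ι : Type} [Fintype ι] [DecidableEq ι] (g : PFn ι Bool Bool) (R : ℝ) where
  D : SabDom g → ℝ
  nonneg : ∀ q, 0 ≤ D q
  sum_one : ∑ q, D q = 1
  mul_sum_findsSym_le : ∀ s : DTree ι Sab Bool,
    R * ∑ q, D q * (if s.FindsSym q then 1 else 0) ≤ ∑ q, D q * s.symCost q

theorem exists_hardDist {ι : Type} [Fintype ι] [DecidableEq ι] {g : PFn ι Bool Bool}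
    (hg : ∃ q, (fsab g q).isSome) : Nonempty (HardDist g (RS g)) := by
  let v : DTree ι Sab Bool → SabDom g → ℝ :=
    fun s q => s.symCost q - RS g * if s.FindsSym q then 1 else 0
  obtain ⟨D, hD0, hD1, hD⟩ := exists_prob_nonneg_of_convexHull (S := Set.range v)
    ⟨_, Set.mem_range_self (.leaf true)⟩ fun x hx => by
      obtain ⟨Ω, _, w, z, hw0, hw1, hz, rfl⟩ := mem_convexHull_iff_exists_fintype.1 hx
      choose s hs using hz
      obtain ⟨q, hq, hle⟩ := exists_RS_mul_findProb_le hg ⟨Ω, w, hw0, hw1, s⟩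
      refine ⟨⟨q, hq⟩, ?_⟩
      simp only [Finset.sum_apply, Pi.smul_apply, ← hs, v, smul_eq_mul, mul_sub,
        Finset.sum_sub_distrib, sub_nonneg]
      rw [RandAlg.findProb, RandAlg.expSymCost, Finset.mul_sum] at hle
      simpa only [mul_left_comm] using hle
  refine ⟨D, hD0, hD1, fun s => ?_⟩
  have := hD _ ⟨s, rfl⟩
  simp only [v, mul_sub, Finset.sum_sub_distrib, sub_nonneg] at this
  simpa only [Finset.mul_sum, mul_left_comm] using this

section Composition

variable {κ μ : Type} {g : PFn μ Bool Bool}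

noncomputable def SabDom.completion (q : SabDom g) (b : Bool) : μ → Bool :=
  (exists_completion q.2 b).choose

theorem SabDom.completion_consistent (q : SabDom g) (b : Bool) :
    SabConsistent q.1 (q.completion b) :=
  (exists_completion q.2 b).choose_spec.1

theorem SabDom.completion_spec (q : SabDom g) (b : Bool) : g (q.completion b) = some b :=
  (exists_completion q.2 b).choose_spec.2

def sabFixed (v : κ → SabDom g) (ij : κ × μ) : Option Sab :=
  if ((v ij.1).1 ij.2).isSym then none else some ((v ij.1).1 ij.2)

noncomputable def sabRead (v : κ → SabDom g) (i : κ) : Sab → μ → Sab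
  | .zero, j => Sab.ofBool ((v i).completion false j)
  | .one, j => Sab.ofBool ((v i).completion true j)
  | s, _ => s

@[simp] theorem sabFixed_eq_none_iff {v : κ → SabDom g} {ij : κ × μ} :
    sabFixed v ij = none ↔ ((v ij.1).1 ij.2).isSym := by
  unfold sabFixed
  split_ifs <;> simp_all

noncomputable def composedInput (v : κ → SabDom g) : (κ → Sab) → κ × μ → Sab :=
  blockInput (sabFixed v) (sabRead v)

theorem pcomp_eq_of_forall {f : PFn κ Bool Bool} {x : κ × μ → Bool} {w : κ → Bool}
    (hx : ∀ i, g (fun j => x (i, j)) = some (w i)) : pcomp f g x = f w := by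
  have hsome : ∀ i, (g fun j => x (i, j)).isSome := fun i => by simp [hx i]
  rw [pcomp, dif_pos hsome]
  congr 1
  funext i
  simp [hx i]

theorem isSabotaged_composedInput {f : PFn κ Bool Bool} {s : Sab} (hs : s.isSym)
    {p : κ → Sab} (hp : IsSabotaged f s p) (v : κ → SabDom g) :
    IsSabotaged (pcomp f g) s (composedInput v p) := by
  obtain ⟨hent, x, y, hx, hy, hxy, hpx, hpy⟩ := hp
  let lift : (κ → Bool) → κ × μ → Bool := fun w ij => (v ij.1).completion (w ij.1) ij.2
  have hlift : ∀ w, pcomp f g (lift w) = f w := fun w =>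
    pcomp_eq_of_forall fun i => (v i).completion_spec (w i)
  have hcons : ∀ w, SabConsistent p w → SabConsistent (composedInput v p) (lift w) := by
    rintro w hw ⟨i, j⟩
    by_cases hq : ((v i).1 j).isSym
    · rcases hw i with h | h | h <;> cases hwi : w i <;>
        simp_all [composedInput, blockInput, sabFixed, sabRead, lift, Sab.ofBool]
    · have := ((v i).completion_consistent (w i)).eq_ofBool (i := j) (by simpa using hq)
      simp [composedInput, blockInput, sabFixed, sabRead, lift, this]
  refine ⟨fun ⟨i, j⟩ => ?_, lift x, lift y, by rwa [hlift], by rwa [hlift],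
    by rwa [hlift, hlift], hcons x hpx, hcons y hpy⟩
  by_cases hq : ((v i).1 j).isSym
  · rcases hent i with h | h | h
    · have := Sab.ofBool_eq_zero_or_eq_one ((v i).completion false j)
      simp only [composedInput, blockInput, sabFixed, sabRead, hq, h]
      tauto
    · have := Sab.ofBool_eq_zero_or_eq_one ((v i).completion true j)
      simp only [composedInput, blockInput, sabFixed, sabRead, hq, h]
      tauto
    · cases s <;> simp_all [composedInput, blockInput, sabFixed, sabRead, Sab.isSym]
  · cases h : (v i).1 j <;> simp_all [composedInput, blockInput, sabFixed, sabRead, Sab.isSym]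

theorem fsab_pcomp_composedInput {f : PFn κ Bool Bool} {p : κ → Sab} {b : Bool}
    (hp : fsab f p = some b) (v : κ → SabDom g) : fsab (pcomp f g) (composedInput v p) = some b :=
  fsab_eq_some_iff.2 (isSabotaged_composedInput (Sab.isSym_sym b) (fsab_eq_some_iff.1 hp) v)

variable [DecidableEq κ]

theorem composedInput_update_of_ne (v : κ → SabDom g) (p : κ → Sab) {i : κ} (k : SabDom g)
    {ij : κ × μ} (h : ij.1 ≠ i) : composedInput (update v i k) p ij = composedInput v p ij := by
  simp [composedInput, blockInput, sabFixed, sabRead, update_of_ne h]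

theorem composedInput_update_self (v : κ → SabDom g) (p : κ → Sab) (i : κ) {k : SabDom g}
    {j : μ} (hj : (k.1 j).isSym = false) : composedInput (update v i k) p (i, j) = k.1 j := by
  simp [composedInput, blockInput, sabFixed, sabRead, hj]

variable [Fintype κ] [Fintype μ] [DecidableEq μ]

/-- Given the other blocks, block `i` is a fresh sample from `H.D`, and `t` restricts to a tree on
block `i`. -/
theorem mul_sum_readsSym_le_sum_blockCost {R : ℝ} (H : HardDist g R)
    (t : DTree (κ × μ) Sab Bool) (p : κ → Sab) (i : κ) :
    R * ∑ v : κ → SabDom g, (∏ j, H.D (v j)) *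
        (if ∃ j, (i, j) ∈ t.queries (composedInput v p) ∧ ((v i).1 j).isSym then 1 else 0) ≤
      ∑ v : κ → SabDom g, (∏ j, H.D (v j)) * t.blockCost (composedInput v p) i := by
  conv_lhs => rw [sum_prod_mul_eq_sum_prod_mul_sum_update H.sum_one _ i, Finset.mul_sum]
  conv_rhs => rw [sum_prod_mul_eq_sum_prod_mul_sum_update H.sum_one _ i]
  refine Finset.sum_le_sum fun v _ => ?_
  set s := (t.restrictBlock (composedInput v p) i)
  have hcongr : ∀ k, t.restrictBlock (composedInput (update v i k) p) i = s := fun k =>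
    DTree.restrictBlock_congr (fun ij h => composedInput_update_of_ne v p k h) t
  have hF : ∀ k : SabDom g, (∃ j, (i, j) ∈ t.queries (composedInput (update v i k) p) ∧
      ((update v i k i).1 j).isSym) ↔ s.FindsSym k.1 := fun k => by
    rw [update_self, ← hcongr k, DTree.findsSym_restrictBlock_iff
      (fun j hj => composedInput_update_self v p i hj)]
  have hG : ∀ k : SabDom g, (s.symCost k.1 : ℝ) ≤ t.blockCost (composedInput (update v i k) p) i :=
    fun k => by
      rw [← hcongr k]
      exact_mod_cast DTree.symCost_restrictBlock_le
        (fun j hj => composedInput_update_self v p i hj) t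
  simp only [hF]
  rw [mul_left_comm]
  refine mul_le_mul_of_nonneg_left ((H.mul_sum_findsSym_le s).trans ?_)
    (Finset.prod_nonneg fun j _ => H.nonneg _)
  exact Finset.sum_le_sum fun k _ => mul_le_mul_of_nonneg_left (hG k) (H.nonneg k)

theorem mul_sum_cost_simulate_le {R : ℝ} (hR : 0 ≤ R) (H : HardDist g R)
    (t : DTree (κ × μ) Sab Bool) (p : κ → Sab) :
    R * ∑ v : κ → SabDom g, (∏ j, H.D (v j)) *
        (t.simulate (sabFixed v) (sabRead v) fun _ => none).cost p ≤
      ∑ v : κ → SabDom g, (∏ j, H.D (v j)) * t.cost (composedInput v p) := by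
  have hsim : ∀ v : κ → SabDom g, ((t.simulate (sabFixed v) (sabRead v) fun _ => none).cost p : ℝ) ≤
      ∑ i, if ∃ j, (i, j) ∈ t.queries (composedInput v p) ∧ ((v i).1 j).isSym then 1 else 0 := by
    intro v
    have := t.cost_simulate_le (fixed := sabFixed v) (read := sabRead v) (p := p)
      (known := fun _ => none) (by simp)
    rw [DTree.readBlocks, Finset.card_filter] at this
    simp only [true_and, sabFixed_eq_none_iff] at this
    exact_mod_cast this
  calc R * ∑ v : κ → SabDom g, (∏ j, H.D (v j)) *
        ((t.simulate (sabFixed v) (sabRead v) fun _ => none).cost p : ℝ)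
      ≤ R * ∑ v : κ → SabDom g, (∏ j, H.D (v j)) *
        ∑ i, (if ∃ j, (i, j) ∈ t.queries (composedInput v p) ∧ ((v i).1 j).isSym then 1 else 0) :=
        mul_le_mul_of_nonneg_left (Finset.sum_le_sum fun v _ => mul_le_mul_of_nonneg_left (hsim v)
          (Finset.prod_nonneg fun j _ => H.nonneg _)) hR
    _ = ∑ i, R * ∑ v : κ → SabDom g, (∏ j, H.D (v j)) *
        (if ∃ j, (i, j) ∈ t.queries (composedInput v p) ∧ ((v i).1 j).isSym then 1 else 0) := by
        simp only [Finset.mul_sum]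
        exact Finset.sum_comm
    _ ≤ ∑ i, ∑ v : κ → SabDom g, (∏ j, H.D (v j)) * t.blockCost (composedInput v p) i :=
        Finset.sum_le_sum fun i _ => mul_sum_readsSym_le_sum_blockCost H t p i
    _ = ∑ v : κ → SabDom g, (∏ j, H.D (v j)) * t.cost (composedInput v p) := by
        rw [Finset.sum_comm]
        simp only [← Finset.mul_sum, ← DTree.sum_blockCost t, Nat.cast_sum]

noncomputable def simAlg (A : RandAlg (κ × μ) Sab Bool) {R : ℝ} (H : HardDist g R) :
    RandAlg κ Sab Bool :=
  letI := A.fin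
  { Ω := A.Ω × (κ → SabDom g)
    p := fun ω => A.p ω.1 * ∏ i, H.D (ω.2 i)
    nonneg := fun ω => mul_nonneg (A.nonneg _) (Finset.prod_nonneg fun i _ => H.nonneg _)
    sum_one := by
      simp only [Fintype.sum_prod_type]
      rw [← Finset.sum_mul_sum, A.sum_one, ← Fintype.prod_sum, H.sum_one, Finset.prod_const_one,
        one_mul]
    tree := fun ω => (A.tree ω.1).simulate (sabFixed ω.2) (sabRead ω.2) fun _ => none }

variable {A : RandAlg (κ × μ) Sab Bool} {R : ℝ} (H : HardDist g R)

theorem computes_simAlg {f : PFn κ Bool Bool} (hA : A.Computes (fsab (pcomp f g)) 0) :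
    (simAlg A H).Computes (fsab f) 0 := by
  rw [RandAlg.computes_zero_iff] at hA ⊢
  rintro p b hp ⟨ω, v⟩ hω
  change ((A.tree ω).simulate (sabFixed v) (sabRead v) fun _ => none).output p = b
  rw [DTree.output_simulate (known := fun _ => none) _ (by simp)]
  exact hA _ b (fsab_pcomp_composedInput hp v) ω (left_ne_zero_of_mul hω)

theorem mul_expCost_simAlg_le (hR : 0 ≤ R) {f : PFn κ Bool Bool} {T : ℝ}
    (hA : A.ECostLe (fsab (pcomp f g)) T) {p : κ → Sab}
    (hp : (fsab f p).isSome) : R * (simAlg A H).expCost p ≤ T := by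
  let := A.fin
  have hdom : ∀ v, (fsab (pcomp f g) (composedInput v p)).isSome := fun v => by
    obtain ⟨b, hb⟩ := Option.isSome_iff_exists.1 hp
    rw [fsab_pcomp_composedInput hb v]
    rfl
  calc R * (simAlg A H).expCost p
      = ∑ ω, A.p ω * (R * ∑ v : κ → SabDom g, (∏ i, H.D (v i)) *
          ((A.tree ω).simulate (sabFixed v) (sabRead v) fun _ => none).cost p) := by
        change R * ∑ ωv : A.Ω × (κ → SabDom g), A.p ωv.1 * (∏ i, H.D (ωv.2 i)) *
          (((A.tree ωv.1).simulate (sabFixed ωv.2) (sabRead ωv.2) fun _ => none).cost p : ℝ) = _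
        simp only [Fintype.sum_prod_type, Finset.mul_sum]
        exact Finset.sum_congr rfl fun ω _ => Finset.sum_congr rfl fun v _ => by ring
    _ ≤ ∑ ω, A.p ω * ∑ v : κ → SabDom g, (∏ i, H.D (v i)) * (A.tree ω).cost (composedInput v p) :=
        Finset.sum_le_sum fun ω _ => mul_le_mul_of_nonneg_left
          (mul_sum_cost_simulate_le hR H _ p) (A.nonneg ω)
    _ = ∑ v : κ → SabDom g, (∏ i, H.D (v i)) * A.expCost (composedInput v p) := by
        simp only [RandAlg.expCost, Finset.mul_sum]
        rw [Finset.sum_comm]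
        exact Finset.sum_congr rfl fun v _ => Finset.sum_congr rfl fun ω _ => by ring
    _ ≤ ∑ v : κ → SabDom g, (∏ i, H.D (v i)) * T :=
        Finset.sum_le_sum fun v _ => mul_le_mul_of_nonneg_left (hA _ (hdom v))
          (Finset.prod_nonneg fun i _ => H.nonneg _)
    _ = T := by rw [← Finset.sum_mul, ← Fintype.prod_sum, H.sum_one, Finset.prod_const_one, one_mul]

end Composition

/-- **Perfect composition of randomized sabotage complexity:**
`RS(f ∘ g) ≥ RS(f) · RS(g)` for all partial Boolean functions `f` and `g`. -/
theorem RS_composition {n m : ℕ} (f : PFn (Fin n) Bool Bool)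
    (g : PFn (Fin m) Bool Bool) :
    RS f * RS g ≤ RS (pcomp f g) := by
  rcases (RS_nonneg g).eq_or_lt with hg | hg
  · rw [← hg, mul_zero]
    exact RS_nonneg _
  have hdom : ∃ q, (fsab g q).isSome := by
    by_contra! h
    exact hg.ne' (R0_eq_zero_of_forall_eq_none fun q => by simpa using h q)
  obtain ⟨H⟩ := exists_hardDist hdom
  refine le_R0 fun T A hT hA hcost => ?_
  have hf : RS f ≤ T / RS g := R0_le (div_nonneg hT hg.le) (computes_simAlg H hA)
    fun p hp => (le_div_iff₀' hg).2 (mul_expCost_simAlg_le H hg.le hcost hp)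
  calc RS f * RS g ≤ T / RS g * RS g := mul_le_mul_of_nonneg_right hf hg.le
    _ = T := div_mul_cancel₀ T hg.ne'
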